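/- arXiv:2503.06673 — 2 statements merged into one kernel-verified Lean document; each statement's English description precedes it below -/
import Mathlib

section
/- Let (X,d) be a complete metric space with a ccc geodesic bicombing σ, let o,o' ∈ X, and let C > 2·d(o,o'). Suppose Φ assigns to every σ-ray ξ emanating from o a σ-ray Φ(ξ) emanating from o' that is asymptotic to ξ. Then for all σ-rays ξ₁,ξ₂ emanating from o one has d_{o,C}(ξ₁,ξ₂) ≤ (C/(C − 2·d(o,o')))·d_{o',C}(Φ(ξ₁),Φ(ξ₂)). -/
open Metric Set

variable {X : Type*} [MetricSpace X]

/-- A geodesic bicombing on a metric space: a continuous choice of constant-speed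
geodesics, parametrized on `[0,1]`. -/
def IsGeodesicBicombing (σ : X → X → ℝ → X) : Prop :=
  ContinuousOn (fun p : X × X × ℝ => σ p.1 p.2.1 p.2.2)
    {p : X × X × ℝ | p.2.2 ∈ Set.Icc (0 : ℝ) 1} ∧
  (∀ x y : X, σ x y 0 = x) ∧
  (∀ x y : X, σ x y 1 = y) ∧
  (∀ x y : X, ∀ s ∈ Set.Icc (0 : ℝ) 1, ∀ t ∈ Set.Icc (0 : ℝ) 1,
    dist (σ x y s) (σ x y t) = |s - t| * dist x y)

/-- A bicombing is conical. -/
def IsConical (σ : X → X → ℝ → X) : Prop :=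
  ∀ x y x' y' : X, ∀ t ∈ Set.Icc (0 : ℝ) 1,
    dist (σ x y t) (σ x' y' t) ≤ (1 - t) * dist x x' + t * dist y y'

/-- A bicombing is consistent. -/
def IsConsistent (σ : X → X → ℝ → X) : Prop :=
  ∀ x y : X, ∀ s t l : ℝ, 0 ≤ s → s ≤ t → t ≤ 1 → l ∈ Set.Icc (0 : ℝ) 1 →
    σ (σ x y s) (σ x y t) l = σ x y ((1 - l) * s + l * t)

/-- A ccc bicombing: a geodesic bicombing that is consistent and conical. -/
def IsCCC (σ : X → X → ℝ → X) : Prop :=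
  IsGeodesicBicombing σ ∧ IsConsistent σ ∧ IsConical σ

/-- A `σ`-ray: a unit-speed geodesic ray compatible with the bicombing `σ`
(encoded as a map on `ℝ` which is constant on `(-∞,0]`). -/
def IsRay (σ : X → X → ℝ → X) (ξ : ℝ → X) : Prop :=
  (∀ t : ℝ, t ≤ 0 → ξ t = ξ 0) ∧
  (∀ s t : ℝ, 0 ≤ s → 0 ≤ t → dist (ξ s) (ξ t) = |s - t|) ∧
  (∀ t : ℝ, 0 ≤ t → ∀ s ∈ Set.Icc (0 : ℝ) 1, σ (ξ 0) (ξ t) s = ξ (s * t))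

/-- Two rays are asymptotic: their distance at time `t` is uniformly bounded for `t ≥ 0`. -/
def Asymptotic (ξ ζ : ℝ → X) : Prop :=
  ∃ M : ℝ, ∀ t : ℝ, 0 ≤ t → dist (ξ t) (ζ t) ≤ M

/-- `dC` is the function `d_{o,C}` on σ-rays emanating from `o`. -/
def DoCSpec (σ : X → X → ℝ → X) (o : X) (C : ℝ)
    (dC : (ℝ → X) → (ℝ → X) → ℝ) : Prop :=
  (∀ ξ : ℝ → X, IsRay σ ξ → ξ 0 = o → dC ξ ξ = 0) ∧
  (∀ ξ ζ : ℝ → X, IsRay σ ξ → IsRay σ ζ → ξ 0 = o → ζ 0 = o → ξ ≠ ζ →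
    ∃ t : ℝ, 0 < t ∧ dist (ξ t) (ζ t) = C ∧ dC ξ ζ = 1 / t)

/-- Two σ-rays from a common point spread out at a rate nondecreasing in time. -/
lemma ray_cone_bound {σ : X → X → ℝ → X} (hσ : IsCCC σ) {ξ ζ : ℝ → X}
    (hξ : IsRay σ ξ) (hζ : IsRay σ ζ) (h0 : ξ 0 = ζ 0)
    {s t : ℝ} (hs : 0 ≤ s) (hst : s ≤ t) (ht : 0 < t) :
    dist (ξ s) (ζ s) ≤ (s / t) * dist (ξ t) (ζ t) := by
  have hmem : s / t ∈ Set.Icc (0:ℝ) 1 := ⟨div_nonneg hs ht.le, (div_le_one ht).2 hst⟩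
  have h1 : σ (ξ 0) (ξ t) (s/t) = ξ s := by
    rw [hξ.2.2 t ht.le (s/t) hmem, div_mul_cancel₀ _ ht.ne']
  have h2 : σ (ζ 0) (ζ t) (s/t) = ζ s := by
    rw [hζ.2.2 t ht.le (s/t) hmem, div_mul_cancel₀ _ ht.ne']
  have h3 := hσ.2.2 (ξ 0) (ξ t) (ζ 0) (ζ t) (s/t) hmem
  rw [h1, h2, h0, dist_self, mul_zero, zero_add] at h3
  exact h3

/-- Distance between asymptotic σ-rays at nonnegative times is at most the initial one. -/
lemma asymptotic_dist_le {σ : X → X → ℝ → X} (hσ : IsCCC σ) {ξ ζ : ℝ → X}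
    (hξ : IsRay σ ξ) (hζ : IsRay σ ζ) (ha : Asymptotic ξ ζ)
    {t : ℝ} (ht : 0 ≤ t) :
    dist (ξ t) (ζ t) ≤ dist (ξ 0) (ζ 0) := by
  obtain ⟨M, hM⟩ := ha
  rcases ht.eq_or_lt with h | h
  · rw [← h]
  refine le_of_forall_pos_le_add fun ε hε => ?_
  set g0 := dist (ξ 0) (ζ 0) with hg0
  set K := max (M - g0) 0 with hKdef
  have hK0 : 0 ≤ K := le_max_right _ _
  set T := t * (K / ε + 1) with hTdef
  have hT0 : 0 < T := by
    have : (0:ℝ) < K / ε + 1 := by positivity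
    exact mul_pos h this
  have hTt : t ≤ T := by
    have h1 : (1:ℝ) ≤ K / ε + 1 := by
      have := div_nonneg hK0 hε.le; linarith
    calc t = t * 1 := (mul_one t).symm
      _ ≤ T := by rw [hTdef]; exact mul_le_mul_of_nonneg_left h1 h.le
  have hmem : t / T ∈ Set.Icc (0:ℝ) 1 :=
    ⟨div_nonneg h.le hT0.le, (div_le_one hT0).2 hTt⟩
  have h1 : σ (ξ 0) (ξ T) (t/T) = ξ t := by
    rw [hξ.2.2 T hT0.le (t/T) hmem, div_mul_cancel₀ _ hT0.ne']
  have h2 : σ (ζ 0) (ζ T) (t/T) = ζ t := by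
    rw [hζ.2.2 T hT0.le (t/T) hmem, div_mul_cancel₀ _ hT0.ne']
  have h3 := hσ.2.2 (ξ 0) (ξ T) (ζ 0) (ζ T) (t/T) hmem
  rw [h1, h2] at h3
  have hl0 : 0 ≤ t / T := hmem.1
  have hMT : dist (ξ T) (ζ T) ≤ M := hM T hT0.le
  have hMK : M - g0 ≤ K := le_max_left _ _
  have hKeps : (t / T) * K ≤ ε := by
    rw [div_mul_eq_mul_div, div_le_iff₀ hT0]
    have hT : ε * T = t * (K + ε) := by
      rw [hTdef, mul_comm, mul_assoc, add_mul, div_mul_cancel₀ _ hε.ne', one_mul]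
    rw [hT]
    nlinarith [h.le, hε.le, hK0]
  nlinarith [mul_le_mul_of_nonneg_left hMT hl0, mul_le_mul_of_nonneg_left hMK hl0]

/-- Two asymptotic σ-rays from the same point coincide. -/
lemma rays_eq_of_asymptotic {σ : X → X → ℝ → X} (hσ : IsCCC σ) {ξ ζ : ℝ → X}
    (hξ : IsRay σ ξ) (hζ : IsRay σ ζ) (h0 : ξ 0 = ζ 0)
    (ha : Asymptotic ξ ζ) : ξ = ζ := by
  obtain ⟨M, hM⟩ := ha
  funext u
  rcases le_or_gt u 0 with hu | hu
  · rw [hξ.1 u hu, hζ.1 u hu, h0]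
  have hdist : dist (ξ u) (ζ u) ≤ 0 := by
    refine le_of_forall_pos_le_add fun ε hε => ?_
    rw [zero_add]
    set M' := max M 0 with hM'def
    have hM'0 : 0 ≤ M' := le_max_right _ _
    set T := u * (M' / ε + 1) with hTdef
    have hT0 : 0 < T := by
      have : (0:ℝ) < M' / ε + 1 := by positivity
      exact mul_pos hu this
    have hTu : u ≤ T := by
      have h1 : (1:ℝ) ≤ M' / ε + 1 := by
        have := div_nonneg hM'0 hε.le; linarith
      calc u = u * 1 := (mul_one u).symm
        _ ≤ T := by rw [hTdef]; exact mul_le_mul_of_nonneg_left h1 hu.le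
    have hb := ray_cone_bound hσ hξ hζ h0 hu.le hTu hT0
    have hl0 : 0 ≤ u / T := div_nonneg hu.le hT0.le
    have hMT : dist (ξ T) (ζ T) ≤ M' := (hM T hT0.le).trans (le_max_left _ _)
    have hKeps : (u / T) * M' ≤ ε := by
      rw [div_mul_eq_mul_div, div_le_iff₀ hT0]
      have hT : ε * T = u * (M' + ε) := by
        rw [hTdef, mul_comm, mul_assoc, add_mul, div_mul_cancel₀ _ hε.ne', one_mul]
      rw [hT]
      nlinarith [hu.le, hε.le, hM'0]
    calc dist (ξ u) (ζ u) ≤ (u / T) * dist (ξ T) (ζ T) := hb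
      _ ≤ (u / T) * M' := mul_le_mul_of_nonneg_left hMT hl0
      _ ≤ ε := hKeps
  exact dist_le_zero.mp hdist

/-- **Changing the basepoint** (from the proof of Proposition `quasisym (iv)`): if
`C > 2·d(o,o')` and `Φ` sends each σ-ray from `o` to an asymptotic σ-ray from `o'`, then
`d_{o,C}(ξ₁,ξ₂) ≤ (C/(C − 2·d(o,o'))) · d_{o',C}(Φ(ξ₁),Φ(ξ₂))`. -/
theorem dOC_basepoint_change [CompleteSpace X]
    (σ : X → X → ℝ → X) (hσ : IsCCC σ) (o o' : X)
    (C : ℝ) (hC : 2 * dist o o' < C)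
    (Φ : (ℝ → X) → (ℝ → X))
    (hΦ : ∀ ξ : ℝ → X, IsRay σ ξ → ξ 0 = o →
      IsRay σ (Φ ξ) ∧ (Φ ξ) 0 = o' ∧ Asymptotic ξ (Φ ξ))
    (dC dC' : (ℝ → X) → (ℝ → X) → ℝ)
    (hdC : DoCSpec σ o C dC) (hdC' : DoCSpec σ o' C dC') :
    ∀ ξ₁ ξ₂ : ℝ → X, IsRay σ ξ₁ → IsRay σ ξ₂ → ξ₁ 0 = o → ξ₂ 0 = o →
      dC ξ₁ ξ₂ ≤ (C / (C - 2 * dist o o')) * dC' (Φ ξ₁) (Φ ξ₂) := by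
  intro ξ₁ ξ₂ h₁ h₂ e₁ e₂
  obtain ⟨r₁, ro₁, a₁⟩ := hΦ ξ₁ h₁ e₁
  obtain ⟨r₂, ro₂, a₂⟩ := hΦ ξ₂ h₂ e₂
  set D := dist o o' with hD
  have hD0 : 0 ≤ D := dist_nonneg
  have hC0 : 0 < C := lt_of_le_of_lt (by positivity) hC
  have hCD : 0 < C - 2 * D := by linarith
  by_cases hne : ξ₁ = ξ₂
  · subst hne
    rw [hdC.1 ξ₁ h₁ e₁, hdC'.1 (Φ ξ₁) r₁ ro₁, mul_zero]
  obtain ⟨t, ht, hdist, hval⟩ := hdC.2 ξ₁ ξ₂ h₁ h₂ e₁ e₂ hne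
  -- the images are distinct rays from o'
  have hne' : Φ ξ₁ ≠ Φ ξ₂ := by
    intro hEq
    apply hne
    obtain ⟨M₁, hM₁⟩ := a₁
    obtain ⟨M₂, hM₂⟩ := a₂
    refine rays_eq_of_asymptotic hσ h₁ h₂ (e₁.trans e₂.symm) ⟨M₁ + M₂, fun u hu => ?_⟩
    calc dist (ξ₁ u) (ξ₂ u) ≤ dist (ξ₁ u) (Φ ξ₁ u) + dist (ξ₂ u) (Φ ξ₂ u) := by
          rw [hEq, dist_comm (ξ₂ u)]; exact dist_triangle _ _ _
      _ ≤ M₁ + M₂ := add_le_add (hM₁ u hu) (hM₂ u hu)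
  obtain ⟨t', ht', hdist', hval'⟩ := hdC'.2 (Φ ξ₁) (Φ ξ₂) r₁ r₂ ro₁ ro₂ hne'
  -- rays stay within D of their images
  have hb₁ : dist (ξ₁ t) (Φ ξ₁ t) ≤ D := by
    have := asymptotic_dist_le hσ h₁ r₁ a₁ ht.le
    rwa [e₁, ro₁] at this
  have hb₂ : dist (ξ₂ t) (Φ ξ₂ t) ≤ D := by
    have := asymptotic_dist_le hσ h₂ r₂ a₂ ht.le
    rwa [e₂, ro₂] at this
  have hlow : C - 2 * D ≤ dist (Φ ξ₁ t) (Φ ξ₂ t) := by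
    have htri : dist (ξ₁ t) (ξ₂ t) ≤
        dist (ξ₁ t) (Φ ξ₁ t) + dist (Φ ξ₁ t) (Φ ξ₂ t) + dist (Φ ξ₂ t) (ξ₂ t) :=
      dist_triangle4 _ _ _ _
    rw [hdist] at htri
    have : dist (Φ ξ₂ t) (ξ₂ t) = dist (ξ₂ t) (Φ ξ₂ t) := dist_comm _ _
    linarith
  rw [hval, hval']
  rcases le_total t t' with htt | htt
  · -- t ≤ t' : use the cone bound at times t ≤ t'
    have h4 := ray_cone_bound hσ r₁ r₂ (ro₁.trans ro₂.symm) ht.le htt ht'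
    rw [hdist'] at h4
    have h4' : C - 2 * D ≤ t / t' * C := hlow.trans h4
    rw [div_mul_eq_mul_div, le_div_iff₀ ht'] at h4'
    rw [div_mul_div_comm, mul_one, div_le_div_iff₀ ht (by positivity), one_mul]
    linarith
  · -- t' ≤ t
    have h6 : 1 / t ≤ 1 / t' := one_div_le_one_div_of_le ht' htt
    have h7 : 1 / t' ≤ C / (C - 2 * D) * (1 / t') := by
      have hfac : (1:ℝ) ≤ C / (C - 2 * D) := (one_le_div hCD).2 (by linarith)
      exact le_mul_of_one_le_left (by positivity) hfac
    linarith
end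

section
/- Let (X,d) be a geodesic metric space with a ccc geodesic bicombing σ and a basepoint o ∈ X. Then the map Σ : X × ℕ → X defined by Σ(x,n) := ρ_o^x(n) is a combing of X with basepoint o, and it is coherent with constant 0; in fact Σ(Σ(x,n),m) = Σ(x,m) for all x ∈ X and all natural numbers m ≤ n. -/
open Metric Set

variable {X : Type*} [MetricSpace X]

/-- A combing of a metric space with basepoint `o`. -/
def IsCombing (o : X) (c : X → ℕ → X) : Prop :=
  (∀ n : ℕ, c o n = o) ∧ (∀ x : X, c x 0 = o) ∧
  (∀ R : ℝ, 0 ≤ R → ∃ N : ℕ, ∀ n : ℕ, N ≤ n → ∀ x : X, dist o x ≤ R → c x n = x) ∧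
  (∀ D : ℝ, 0 < D → ∃ C : ℝ, ∀ (x x' : X) (n n' : ℕ),
    dist x x' ≤ D → |(n : ℝ) - (n' : ℝ)| ≤ D → dist (c x n) (c x' n') ≤ C)

/-- A morphism of combed spaces. -/
def IsCombingMorphism {Y : Type*} [MetricSpace Y]
    (cX : X → ℕ → X) (cY : Y → ℕ → Y) (α : X → Y) : Prop :=
  ∃ C : ℝ, ∀ (x : X) (n : ℕ), dist (α (cX x n)) (cY (α x) n) ≤ C

/-- A coarsely Lipschitz map. -/
def CoarselyLipschitz {Y : Type*} [MetricSpace Y] (f : X → Y) : Prop :=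
  ∃ C : ℝ, 0 < C ∧ ∀ x x' : X, dist (f x) (f x') ≤ C * dist x x' + C

/-- Two maps are at finite distance from each other. -/
def FiniteDistance {Y : Type*} [MetricSpace Y] (f g : X → Y) : Prop :=
  ∃ C : ℝ, ∀ x : X, dist (f x) (g x) ≤ C

/-- A geodesic metric space: every pair of points is joined by a (constant-speed) geodesic. -/
def IsGeodesicSpace (X : Type*) [MetricSpace X] : Prop :=
  ∀ x y : X, ∃ γ : ℝ → X, γ 0 = x ∧ γ 1 = y ∧
    ∀ s ∈ Set.Icc (0 : ℝ) 1, ∀ t ∈ Set.Icc (0 : ℝ) 1,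
      dist (γ s) (γ t) = |s - t| * dist x y

open Classical in
/-- `ρ_o^x(r)`: the point at parameter `r` on the σ-geodesic from `o` to `x`
(reparametrized by arclength, stopping at `x`). -/
noncomputable def rho (σ : X → X → ℝ → X) (o x : X) (r : ℝ) : X :=
  if x = o then o else σ o x (min (r / dist o x) 1)

/-!
Away from the basepoint `ρ_o^x(r) = σ_{ox}(min (r / d(o,x)) 1)`, and since `r / 0 = 0` and
`σ_{oo}(0) = o` this formula holds for `x = o` too. The point `ρ_o^x(r)` lies on `σ_{ox}` at
distance `min r (d(o,x))` from `o`, so by consistency the `σ`-geodesic from `o` to it is an initial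
piece of `σ_{ox}`; this gives `ρ_o^{ρ_o^x(r)}(s) = ρ_o^x(s)` for `s ≤ r`. For the combing
axioms, `ρ_o^x` is 1-Lipschitz in `r`, and to compare `ρ_o^x(r)` with `ρ_o^{x'}(r)`, where
`d(o,x) ≤ d(o,x')`, one first moves to `σ_{ox'}` at the same parameter, at cost at most
`d(x,x')` by conicality, and then along `σ_{ox'}`, at cost at most `d(o,x') - d(o,x) ≤ d(x,x')`.
-/

lemma min_div_one_mul {r a : ℝ} (hr : 0 ≤ r) (ha : 0 ≤ a) : min (r / a) 1 * a = min r a := by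
  rcases ha.eq_or_lt with rfl | ha
  · simp [hr]
  · rw [min_mul_of_nonneg _ _ ha.le, div_mul_cancel₀ _ ha.ne', one_mul]

lemma min_div_one_mem_Icc {r a : ℝ} (hr : 0 ≤ r) (ha : 0 ≤ a) : min (r / a) 1 ∈ Icc (0 : ℝ) 1 :=
  ⟨le_min (div_nonneg hr ha) zero_le_one, min_le_right _ _⟩

lemma abs_min_div_sub_min_div_mul_le {r a a' : ℝ} (hr : 0 ≤ r) (ha : 0 ≤ a) (haa' : a ≤ a') :
    |min (r / a) 1 - min (r / a') 1| * a' ≤ a' - a := by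
  rcases ha.eq_or_lt with rfl | ha
  · rw [div_zero, min_eq_left zero_le_one, zero_sub, abs_neg,
      abs_of_nonneg (min_div_one_mem_Icc hr haa').1, min_div_one_mul hr haa', sub_zero]
    exact min_le_right r a'
  have ha' := ha.trans_le haa'
  rcases le_total r a with hra | har
  · rw [min_eq_left ((div_le_one ha).2 hra), min_eq_left ((div_le_one ha').2 (hra.trans haa')),
      abs_of_nonneg (sub_nonneg.2 (div_le_div_of_nonneg_left hr ha haa')), sub_mul,
      div_mul_cancel₀ _ ha'.ne', div_mul_eq_mul_div, div_sub' ha.ne', div_le_iff₀ ha]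
    nlinarith
  rw [min_eq_right ((one_le_div ha).2 har)]
  rcases le_total r a' with hra' | har'
  · rw [min_eq_left ((div_le_one ha').2 hra'),
      abs_of_nonneg (sub_nonneg.2 ((div_le_one ha').2 hra')), sub_mul, one_mul,
      div_mul_cancel₀ _ ha'.ne']
    linarith
  · rw [min_eq_right ((one_le_div ha').2 har'), sub_self, abs_zero, zero_mul]
    linarith

lemma min_div_min_mul_min_div {s r a : ℝ} (hs : 0 ≤ s) (hsr : s ≤ r) (ha : 0 ≤ a) :
    min (s / min r a) 1 * min (r / a) 1 = min (s / a) 1 := by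
  rcases le_total r a with hra | har
  · rw [min_eq_left hra]
    rcases hs.eq_or_lt with rfl | hs
    · simp
    have hr := hs.trans_le hsr
    have ha := hr.trans_le hra
    rw [min_eq_left ((div_le_one hr).2 hsr), min_eq_left ((div_le_one ha).2 hra),
      min_eq_left ((div_le_one ha).2 (hsr.trans hra))]
    field_simp
  · rw [min_eq_right har]
    rcases ha.eq_or_lt with rfl | ha
    · simp
    rw [min_eq_right ((one_le_div ha).2 har), mul_one]

theorem rho_self (σ : X → X → ℝ → X) (o : X) (r : ℝ) : rho σ o o r = o := by
  simp [rho]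

namespace IsGeodesicBicombing

variable {σ : X → X → ℝ → X} (hσ : IsGeodesicBicombing σ)
include hσ

theorem apply_zero (x y : X) : σ x y 0 = x := hσ.2.1 x y

theorem apply_one (x y : X) : σ x y 1 = y := hσ.2.2.1 x y

theorem dist_eq {x y : X} {s t : ℝ} (hs : s ∈ Icc (0 : ℝ) 1) (ht : t ∈ Icc (0 : ℝ) 1) :
    dist (σ x y s) (σ x y t) = |s - t| * dist x y :=
  hσ.2.2.2 x y s hs t ht

theorem dist_left (x y : X) {t : ℝ} (ht : t ∈ Icc (0 : ℝ) 1) :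
    dist x (σ x y t) = t * dist x y := by
  have h := hσ.dist_eq (x := x) (y := y) ⟨le_rfl, zero_le_one⟩ ht
  rwa [hσ.apply_zero, zero_sub, abs_neg, abs_of_nonneg ht.1] at h

theorem dist_right (x y : X) {t : ℝ} (ht : t ∈ Icc (0 : ℝ) 1) :
    dist (σ x y t) y = (1 - t) * dist x y := by
  have h := hσ.dist_eq (x := x) (y := y) ht ⟨zero_le_one, le_rfl⟩
  rwa [hσ.apply_one, abs_of_nonpos (sub_nonpos.2 ht.2), neg_sub] at h

theorem rho_eq (o x : X) (r : ℝ) : rho σ o x r = σ o x (min (r / dist o x) 1) := by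
  by_cases hx : x = o
  · subst hx
    simp [rho, hσ.apply_zero]
  · simp [rho, hx]

theorem rho_zero (o x : X) : rho σ o x 0 = o := by
  simp [hσ.rho_eq, hσ.apply_zero]

theorem dist_rho {o x : X} {r : ℝ} (hr : 0 ≤ r) : dist o (rho σ o x r) = min r (dist o x) := by
  rw [hσ.rho_eq, hσ.dist_left o x (min_div_one_mem_Icc hr dist_nonneg),
    min_div_one_mul hr dist_nonneg]

theorem rho_of_dist_le {o x : X} {r : ℝ} (h : dist o x ≤ r) : rho σ o x r = x := by
  have hr := dist_nonneg.trans h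
  rw [← dist_eq_zero, hσ.rho_eq, hσ.dist_right o x (min_div_one_mem_Icc hr dist_nonneg), sub_mul,
    one_mul, min_div_one_mul hr dist_nonneg, min_eq_right h, sub_self]

theorem dist_rho_rho_le {o x : X} {r r' : ℝ} (hr : 0 ≤ r) (hr' : 0 ≤ r') :
    dist (rho σ o x r) (rho σ o x r') ≤ |r - r'| := by
  have hd : 0 ≤ dist o x := dist_nonneg
  rw [hσ.rho_eq, hσ.rho_eq, hσ.dist_eq (min_div_one_mem_Icc hr hd) (min_div_one_mem_Icc hr' hd),
    ← abs_of_nonneg hd, ← abs_mul, abs_of_nonneg hd, sub_mul, min_div_one_mul hr hd,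
    min_div_one_mul hr' hd]
  simpa using abs_min_sub_min_le_max r (dist o x) r' (dist o x)

end IsGeodesicBicombing

section

variable {σ : X → X → ℝ → X}

theorem IsConical.dist_rho_rho_le (hc : IsConical σ) (hσ : IsGeodesicBicombing σ) (o x x' : X)
    {r : ℝ} (hr : 0 ≤ r) : dist (rho σ o x r) (rho σ o x' r) ≤ 2 * dist x x' := by
  wlog hxx' : dist o x ≤ dist o x' generalizing x x'
  · rw [dist_comm, dist_comm x]
    exact this x' x (le_of_not_ge hxx')
  have hd : 0 ≤ dist o x := dist_nonneg
  have ht := min_div_one_mem_Icc hr hd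
  have ht' := min_div_one_mem_Icc hr (hd.trans hxx')
  rw [hσ.rho_eq, hσ.rho_eq]
  set t := min (r / dist o x) 1
  set t' := min (r / dist o x') 1
  have h_same_time : dist (σ o x t) (σ o x' t) ≤ dist x x' := by
    have h := hc o x o x' t ht
    rw [dist_self, mul_zero, zero_add] at h
    exact h.trans (mul_le_of_le_one_left dist_nonneg ht.2)
  have h_same_ray : dist (σ o x' t) (σ o x' t') ≤ dist o x' - dist o x := by
    rw [hσ.dist_eq ht ht']
    exact abs_min_div_sub_min_div_mul_le hr hd hxx'
  have h_triangle : dist o x' ≤ dist o x + dist x x' := dist_triangle o x x'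
  calc dist (σ o x t) (σ o x' t')
      ≤ dist (σ o x t) (σ o x' t) + dist (σ o x' t) (σ o x' t') := dist_triangle _ _ _
    _ ≤ 2 * dist x x' := by linarith

theorem IsConsistent.rho_rho (hc : IsConsistent σ) (hσ : IsGeodesicBicombing σ) (o x : X)
    {s r : ℝ} (hs : 0 ≤ s) (hsr : s ≤ r) : rho σ o (rho σ o x r) s = rho σ o x s := by
  have hr := hs.trans hsr
  have hd : 0 ≤ dist o x := dist_nonneg
  have ht := min_div_one_mem_Icc hr hd
  have hl := min_div_one_mem_Icc hs (le_min hr hd)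
  have h_sub := hc o x 0 _ _ le_rfl ht.1 ht.2 hl
  rw [hσ.apply_zero, mul_zero, zero_add] at h_sub
  rw [hσ.rho_eq _ (rho σ o x r), hσ.dist_rho hr, hσ.rho_eq o x r, h_sub,
    min_div_min_mul_min_div hs hsr hd, hσ.rho_eq]

theorem IsGeodesicBicombing.isCombing_rho (hσ : IsGeodesicBicombing σ) (hc : IsConical σ)
    (o : X) : IsCombing o (fun x n => rho σ o x (n : ℝ)) := by
  refine ⟨fun n => rho_self σ o n, fun x => by simpa using hσ.rho_zero o x, ?_, ?_⟩
  · intro R _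
    refine ⟨⌈R⌉₊, fun n hn x hx => hσ.rho_of_dist_le ?_⟩
    calc dist o x ≤ R := hx
      _ ≤ ⌈R⌉₊ := Nat.le_ceil R
      _ ≤ n := by exact_mod_cast hn
  · intro D _
    refine ⟨3 * D, fun x x' n n' hxx' hnn' => ?_⟩
    calc dist (rho σ o x n) (rho σ o x' n')
        ≤ dist (rho σ o x n) (rho σ o x n') + dist (rho σ o x n') (rho σ o x' n') :=
          dist_triangle _ _ _
      _ ≤ |(n : ℝ) - n'| + 2 * dist x x' :=
          add_le_add (hσ.dist_rho_rho_le n.cast_nonneg n'.cast_nonneg)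
            (hc.dist_rho_rho_le hσ o x x' n'.cast_nonneg)
      _ ≤ 3 * D := by linarith

end

theorem rho_is_coherent_combing_general
    (σ : X → X → ℝ → X) (hσ : IsCCC σ) (o : X) :
    IsCombing o (fun x n => rho σ o x (n : ℝ)) ∧
    (∀ (x : X) (m n : ℕ), m ≤ n →
      dist (rho σ o (rho σ o x (n : ℝ)) (m : ℝ)) (rho σ o x (m : ℝ)) ≤ 0) ∧
    (∀ (x : X) (m n : ℕ), m ≤ n →
      rho σ o (rho σ o x (n : ℝ)) (m : ℝ) = rho σ o x (m : ℝ)) := by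
  obtain ⟨hgeod, hcons, hcon⟩ := hσ
  have h_coherent : ∀ (x : X) (m n : ℕ), m ≤ n →
      rho σ o (rho σ o x (n : ℝ)) (m : ℝ) = rho σ o x (m : ℝ) := fun x m n hmn =>
    hcons.rho_rho hgeod o x m.cast_nonneg (Nat.cast_le.2 hmn)
  exact ⟨hgeod.isCombing_rho hcon o,
    fun x m n hmn => by rw [h_coherent x m n hmn, dist_self], h_coherent⟩

/-- **The map `Σ(x,n) := ρ_o^x(n)` is a coherent (with constant `0`) combing**
(from the proof of Theorem A via the Engel–Wulff construction). -/
theorem rho_is_coherent_combing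
    (hgeo : IsGeodesicSpace X)
    (σ : X → X → ℝ → X) (hσ : IsCCC σ) (o : X) :
    IsCombing o (fun x n => rho σ o x (n : ℝ)) ∧
    (∀ (x : X) (m n : ℕ), m ≤ n →
      dist (rho σ o (rho σ o x (n : ℝ)) (m : ℝ)) (rho σ o x (m : ℝ)) ≤ 0) ∧
    (∀ (x : X) (m n : ℕ), m ≤ n →
      rho σ o (rho σ o x (n : ℝ)) (m : ℝ) = rho σ o x (m : ℝ)) :=
  rho_is_coherent_combing_general σ hσ o
end
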